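/- Let p be an odd prime. Then for any integer x, the sum over k from 0 to p-1 of C(2k,k)^2 * C(4k,2k) * (x*(1-64x))^k is congruent modulo p^2 to the square of the sum over k from 0 to p-1 of C(2k,k) * C(4k,2k) * x^k. -/

import Mathlib

/-!
As formal power series, `∑ₖ C(2k,k)² C(4k,2k) (x(1-64x))ᵏ = (∑ₖ C(2k,k) C(4k,2k) xᵏ)²`.
Comparing the coefficients of `xⁿ`, both sides satisfy the same three-term recurrence (proved by
creative telescoping, with certificates found by Zeilberger's algorithm) and agree for `n = 0, 1`.

Truncating both series at `k < p` only changes coefficients of `xⁿ` with `n ≥ p`, and every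
summand contributing to such a coefficient is divisible by `p²`. On the left, `C(k, n - k) ≠ 0`
forces `2k ≥ p`, so `p ∣ C(2k,k)`, which occurs squared. On the right, for `i ≤ j < p ≤ i + j`,
`p` divides `C(2j,j)` and also one of `C(2i,i)`, `C(4i,2i)`, `C(4j,2j)`; the last case, where
`4i < p`, comes from Lucas' theorem, since then `4j > 3p`.
-/

open Finset Nat

def bCoeff (k : ℕ) : ℕ := (2 * k).choose k * (4 * k).choose (2 * k)

def cCoeff (k : ℕ) : ℕ := (2 * k).choose k * bCoeff k

theorem bCoeff_eq_centralBinom_mul (k : ℕ) :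
    bCoeff k = centralBinom k * centralBinom (2 * k) := by
  simp only [bCoeff, centralBinom_eq_two_mul_choose, ← mul_assoc]
  norm_num

theorem succ_sq_mul_bCoeff_succ (k : ℕ) :
    (k + 1) ^ 2 * bCoeff (k + 1) = 4 * (4 * k + 1) * (4 * k + 3) * bCoeff k := by
  have h₁ := succ_mul_centralBinom_succ k
  have h₂ := succ_mul_centralBinom_succ (2 * k)
  have h₃ := succ_mul_centralBinom_succ (2 * k + 1)
  rw [bCoeff_eq_centralBinom_mul, bCoeff_eq_centralBinom_mul,
    show 2 * (k + 1) = 2 * k + 1 + 1 by ring]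
  apply Nat.eq_of_mul_eq_mul_left (show 0 < 2 * (2 * k + 1) by omega)
  linear_combination (2 * k + 1) * (k + 1) * centralBinom (k + 1) * h₃
    + 2 * (4 * k + 3) * (2 * k + 1) * centralBinom (2 * k + 1) * h₁
    + 4 * (2 * k + 1) * (4 * k + 3) * centralBinom k * h₂

theorem succ_pow_three_mul_cCoeff_succ (k : ℕ) :
    (k + 1) ^ 3 * cCoeff (k + 1) = 8 * (2 * k + 1) * (4 * k + 1) * (4 * k + 3) * cCoeff k := by
  have h₁ := succ_mul_centralBinom_succ k
  have h₂ := succ_sq_mul_bCoeff_succ k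
  simp only [cCoeff, ← centralBinom_eq_two_mul_choose]
  linear_combination (k + 1) ^ 2 * bCoeff (k + 1) * h₁ + 2 * (2 * k + 1) * centralBinom k * h₂

theorem sum_three_term_eq_zero_of_telescoping {R : Type*} [CommRing R] (F : ℕ → ℕ → R)
    (G : ℕ → R) (α β γ : R) (N : ℕ) (hG : G 0 = 0)
    (hstep : ∀ i ≤ N, α * F (N + 2) i + β * F (N + 1) i + γ * F N i = G (i + 1) - G i)
    (hlast : G (N + 1) + α * (F (N + 2) (N + 1) + F (N + 2) (N + 2))
      + β * F (N + 1) (N + 1) = 0) :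
    α * ∑ i ∈ range (N + 2 + 1), F (N + 2) i + β * ∑ i ∈ range (N + 1 + 1), F (N + 1) i
      + γ * ∑ i ∈ range (N + 1), F N i = 0 := by
  have htel : ∑ i ∈ range (N + 1), (α * F (N + 2) i + β * F (N + 1) i + γ * F N i)
      = G (N + 1) := by
    rw [sum_congr rfl fun i hi ↦ hstep i (Nat.lt_succ_iff.mp (mem_range.mp hi)), sum_range_sub,
      hG, sub_zero]
  rw [sum_add_distrib, sum_add_distrib, ← mul_sum, ← mul_sum, ← mul_sum] at htel
  rw [sum_range_succ _ (N + 2), sum_range_succ _ (N + 1), sum_range_succ _ (N + 1)]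
  linear_combination htel + hlast

section CharZeroField

variable {K : Type*} [Field K] [CharZero K]

theorem cast_add_two_ne_zero (n : ℕ) : (n : K) + 2 ≠ 0 := by
  exact_mod_cast (show n + 2 ≠ 0 by omega)

theorem cast_choose_succ_right (m e : ℕ) :
    (m.choose (e + 1) : K) = m.choose e * ((m : K) - e) / ((e : K) + 1) := by
  rw [eq_div_iff e.cast_add_one_ne_zero]
  rcases le_or_gt e m with h | h
  · rw [← Nat.cast_sub h]
    exact_mod_cast choose_succ_right_eq m e
  · simp [choose_eq_zero_of_lt h, choose_eq_zero_of_lt (show m < e + 1 by omega)]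

theorem cast_choose_eq_choose_succ (m e : ℕ) :
    (m.choose e : K) = (m + 1).choose e * ((m : K) + 1 - e) / ((m : K) + 1) := by
  rw [eq_div_iff m.cast_add_one_ne_zero]
  rcases le_or_gt e (m + 1) with h | h
  · rw [show (m : K) + 1 - e = ((m + 1 - e : ℕ) : K) by push_cast [h]; ring]
    exact_mod_cast choose_mul_succ_eq m e
  · simp [choose_eq_zero_of_lt h, choose_eq_zero_of_lt (show m < e by omega)]

/-- The recurrence `n³ uₙ - 8(2n-1)(8n²-8n+3) uₙ₋₁ + 1024(n-1)(2n-1)(2n-3) uₙ₋₂ = 0`,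
written at `n = N + 2`. -/
def recOp (N : ℕ) (x y z : K) : K :=
  ((N : K) + 2) ^ 3 * x - 8 * (2 * N + 3) * (8 * N ^ 2 + 24 * N + 19) * y
    + 1024 * (N + 1) * (2 * N + 1) * (2 * N + 3) * z

theorem eq_of_recOp_eq_zero {u v : ℕ → K}
    (hu : ∀ N, recOp N (u (N + 2)) (u (N + 1)) (u N) = 0)
    (hv : ∀ N, recOp N (v (N + 2)) (v (N + 1)) (v N) = 0) (h₀ : u 0 = v 0) (h₁ : u 1 = v 1) :
    u = v := by
  have key : ∀ n, u n = v n ∧ u (n + 1) = v (n + 1) := by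
    intro n
    induction n with
    | zero => exact ⟨h₀, h₁⟩
    | succ n ih =>
      refine ⟨ih.2, mul_left_cancel₀ (pow_ne_zero 3 (cast_add_two_ne_zero n)) ?_⟩
      have hun := hu n
      have hvn := hv n
      simp only [recOp] at hun hvn
      linear_combination hun - hvn + 8 * (2 * n + 3) * (8 * n ^ 2 + 24 * n + 19) * ih.2
        - 1024 * (n + 1) * (2 * n + 1) * (2 * n + 3) * ih.1
  exact funext fun n ↦ (key n).1

def convSq (b : ℕ → K) (n : ℕ) : K := ∑ i ∈ range (n + 1), b i * b (n - i)

/-- The coefficient of `xⁿ` in `∑ₖ c k (x - 64 x²)ᵏ`. -/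
def substCoeff (c : ℕ → K) (n : ℕ) : K :=
  ∑ k ∈ range (n + 1), c k * k.choose (n - k) * (-64) ^ (n - k)

/- The two certificates are Zeilberger's, with `j` shifted by one so that they vanish at
`j = 0`. -/

def convSqCert (b : ℕ → K) (N j : ℕ) : K :=
  (j : K) ^ 2 * b j
    * ((2 * j - 3 * N - 6) * b (N + 2 - j) + 64 * (3 * N + 4 - 2 * j) * b (N + 1 - j))

def substCoeffCert (c : ℕ → K) (N j : ℕ) : K :=
  64 * (j : K) ^ 2 * c j * (-64) ^ (N + 1 - j)
    * ((2 * j - N - 2) * j.choose (N + 2 - j) + 2 * (2 * j - N - 1) * j.choose (N + 1 - j))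

section ConvSq

variable {b : ℕ → K}
  (hb : ∀ k : ℕ, ((k : K) + 1) ^ 2 * b (k + 1) = 4 * (4 * k + 1) * (4 * k + 3) * b k)
include hb

theorem eq_div_of_succ_sq_mul (k : ℕ) :
    b (k + 1) = 4 * (4 * k + 1) * (4 * k + 3) * b k / ((k : K) + 1) ^ 2 := by
  rw [eq_div_iff (pow_ne_zero 2 k.cast_add_one_ne_zero)]
  linear_combination hb k

theorem convSq_step (N i : ℕ) (hi : i ≤ N) :
    recOp N (b i * b (N + 2 - i)) (b i * b (N + 1 - i)) (b i * b (N - i))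
      = convSqCert b N (i + 1) - convSqCert b N i := by
  obtain ⟨e, rfl⟩ := Nat.exists_eq_add_of_le hi
  simp only [recOp, convSqCert, show i + e + 2 - i = e + 2 by omega,
    show i + e + 1 - i = e + 1 by omega, show i + e - i = e by omega,
    show i + e + 2 - (i + 1) = e + 1 by omega, show i + e + 1 - (i + 1) = e by omega]
  rw [eq_div_of_succ_sq_mul hb (e + 1), eq_div_of_succ_sq_mul hb e, eq_div_of_succ_sq_mul hb i]
  have he₂ := (e + 1).cast_add_one_ne_zero (R := K)
  push_cast at he₂ ⊢
  field_simp
  ring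

theorem recOp_convSq (N : ℕ) :
    recOp N (convSq b (N + 2)) (convSq b (N + 1)) (convSq b N) = 0 := by
  have h := sum_three_term_eq_zero_of_telescoping (fun n i ↦ b i * b (n - i)) (convSqCert b N)
    (((N : K) + 2) ^ 3) (-(8 * (2 * N + 3) * (8 * N ^ 2 + 24 * N + 19)))
    (1024 * (N + 1) * (2 * N + 1) * (2 * N + 3)) N (by simp [convSqCert])
    (fun i hi ↦ by rw [← convSq_step hb N i hi, recOp]; ring) ?_
  · unfold recOp convSq
    linear_combination h
  · simp only [convSqCert, show N + 2 - (N + 1) = 1 by omega, show N + 1 - (N + 1) = 0 by omega,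
      show N + 2 - (N + 2) = 0 by omega]
    rw [eq_div_of_succ_sq_mul hb (N + 1), eq_div_of_succ_sq_mul hb 0]
    have hN₂ := (N + 1).cast_add_one_ne_zero (R := K)
    push_cast at hN₂ ⊢
    field_simp
    ring

end ConvSq

section SubstCoeff

variable {c : ℕ → K} (hc : ∀ k : ℕ,
  ((k : K) + 1) ^ 3 * c (k + 1) = 8 * (2 * k + 1) * (4 * k + 1) * (4 * k + 3) * c k)
include hc

theorem eq_div_of_succ_pow_three_mul (k : ℕ) :
    c (k + 1) = 8 * (2 * k + 1) * (4 * k + 1) * (4 * k + 3) * c k / ((k : K) + 1) ^ 3 := by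
  rw [eq_div_iff (pow_ne_zero 3 k.cast_add_one_ne_zero)]
  linear_combination hc k

theorem substCoeff_step (N i : ℕ) (hi : i ≤ N) :
    recOp N (c i * i.choose (N + 2 - i) * (-64) ^ (N + 2 - i))
        (c i * i.choose (N + 1 - i) * (-64) ^ (N + 1 - i))
        (c i * i.choose (N - i) * (-64) ^ (N - i))
      = substCoeffCert c N (i + 1) - substCoeffCert c N i := by
  obtain ⟨e, rfl⟩ := Nat.exists_eq_add_of_le hi
  simp only [recOp, substCoeffCert, show i + e + 2 - i = e + 1 + 1 by omega,
    show i + e + 1 - i = e + 1 by omega, show i + e - i = e by omega,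
    show i + e + 2 - (i + 1) = e + 1 by omega, show i + e + 1 - (i + 1) = e by omega]
  -- Pivoting on `C(i + 1, e)` means dividing only by `e + 1`, `e + 2` and `i + 1`,
  -- never by `i + 1 - e`.
  rw [cast_choose_succ_right i (e + 1), cast_choose_succ_right i e, cast_choose_eq_choose_succ i e,
    cast_choose_succ_right (i + 1) e, eq_div_of_succ_pow_three_mul hc i, pow_succ, pow_succ]
  have he₂ := (e + 1).cast_add_one_ne_zero (R := K)
  push_cast at he₂ ⊢
  field_simp
  ring

theorem recOp_substCoeff (N : ℕ) :
    recOp N (substCoeff c (N + 2)) (substCoeff c (N + 1)) (substCoeff c N) = 0 := by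
  have h := sum_three_term_eq_zero_of_telescoping
    (fun n i ↦ c i * i.choose (n - i) * (-64) ^ (n - i)) (substCoeffCert c N)
    (((N : K) + 2) ^ 3) (-(8 * (2 * N + 3) * (8 * N ^ 2 + 24 * N + 19)))
    (1024 * (N + 1) * (2 * N + 1) * (2 * N + 3)) N (by simp [substCoeffCert])
    (fun i hi ↦ by rw [← substCoeff_step hc N i hi, recOp]; ring) ?_
  · unfold recOp substCoeff
    linear_combination h
  · simp only [substCoeffCert, show N + 2 - (N + 1) = 1 by omega,
      show N + 1 - (N + 1) = 0 by omega, show N + 2 - (N + 2) = 0 by omega, choose_one_right,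
      choose_zero_right, pow_zero, pow_one]
    rw [eq_div_of_succ_pow_three_mul hc (N + 1)]
    have hN₂ := (N + 1).cast_add_one_ne_zero (R := K)
    push_cast at hN₂ ⊢
    field_simp
    ring

end SubstCoeff

theorem substCoeff_eq_convSq {b c : ℕ → K}
    (hb : ∀ k : ℕ, ((k : K) + 1) ^ 2 * b (k + 1) = 4 * (4 * k + 1) * (4 * k + 3) * b k)
    (hc : ∀ k : ℕ,
      ((k : K) + 1) ^ 3 * c (k + 1) = 8 * (2 * k + 1) * (4 * k + 1) * (4 * k + 3) * c k)
    (h₀ : c 0 = b 0 ^ 2) : substCoeff c = convSq b := by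
  refine eq_of_recOp_eq_zero (recOp_substCoeff hc) (recOp_convSq hb) ?_ ?_
  · simp [substCoeff, convSq, h₀, sq]
  · have hb₀ := hb 0
    have hc₀ := hc 0
    simp only [substCoeff, convSq, sum_range_succ, sum_range_zero]
    norm_num at hb₀ hc₀ ⊢
    linear_combination hc₀ + 24 * h₀ - 2 * b 0 * hb₀

end CharZeroField

theorem sum_cCoeff_mul_choose_eq_sum_bCoeff_mul (n : ℕ) :
    ∑ i ∈ range (n + 1), (cCoeff i : ℤ) * i.choose (n - i) * (-64) ^ (n - i)
      = ∑ i ∈ range (n + 1), (bCoeff i : ℤ) * bCoeff (n - i) := by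
  have h := congrFun (substCoeff_eq_convSq (K := ℚ) (b := fun k ↦ bCoeff k)
    (c := fun k ↦ cCoeff k) (fun k ↦ by exact_mod_cast succ_sq_mul_bCoeff_succ k)
    (fun k ↦ by exact_mod_cast succ_pow_three_mul_cCoeff_succ k) (by simp [cCoeff, bCoeff])) n
  simp only [substCoeff, convSq] at h
  exact_mod_cast h

theorem mul_one_sub_mul_pow_eq_sum {R : Type*} [CommRing R] (a x : R) {k P : ℕ} (hk : k < P) :
    (x * (1 - a * x)) ^ k = ∑ j ∈ range P, (k.choose j : R) * (-a) ^ j * x ^ (k + j) := by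
  rw [← sum_subset (range_subset_range.mpr hk) fun j _ hj ↦ by
    rw [choose_eq_zero_of_lt (by simpa using hj), Nat.cast_zero, zero_mul, zero_mul]]
  rw [mul_pow, sub_eq_add_neg, add_comm, ← neg_mul, add_pow, mul_sum]
  refine sum_congr rfl fun j _ ↦ ?_
  rw [one_pow, mul_one, mul_pow, pow_add]
  ring

theorem dvd_sum_range_sum_range {R : Type*} [CommRing R] {m : R} {P : ℕ} (D : ℕ → ℕ → R)
    (hdiag : ∀ n < P, ∑ i ∈ range (n + 1), D i (n - i) = 0)
    (hdvd : ∀ i < P, ∀ j < P, P ≤ i + j → m ∣ D i j) :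
    m ∣ ∑ i ∈ range P, ∑ j ∈ range P, D i j := by
  have hsplit : ∀ i ∈ range P,
      ∑ j ∈ range P, D i j = ∑ j ∈ range (P - i), D i j + ∑ j ∈ Ico (P - i) P, D i j :=
    fun i _ ↦ (sum_range_add_sum_Ico _ (Nat.sub_le P i)).symm
  rw [sum_congr rfl hsplit, sum_add_distrib, ← sum_range_diag_flip,
    sum_eq_zero fun n hn ↦ hdiag n (mem_range.mp hn), zero_add]
  refine dvd_sum fun i hi ↦ dvd_sum fun j hj ↦ ?_
  rw [mem_range] at hi
  rw [mem_Ico] at hj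
  exact hdvd i hi j hj.2 (by omega)

theorem Nat.Prime.dvd_choose_of_mod_lt_mod {p n k : ℕ} (hp : p.Prime) (h : n % p < k % p) :
    p ∣ n.choose k := by
  have := Fact.mk hp
  have := Choose.choose_modEq_choose_mod_mul_choose_div_nat (n := n) (k := k) (p := p)
  rwa [choose_eq_zero_of_lt h, zero_mul, Nat.modEq_zero_iff_dvd] at this

theorem prime_dvd_choose_two_mul {p k : ℕ} (hp : p.Prime) (hk : k < p) (h : p ≤ 2 * k) :
    p ∣ (2 * k).choose k := by
  rw [two_mul]
  exact hp.dvd_choose_add hk hk (by omega)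

theorem prime_dvd_choose_four_mul {p k : ℕ} (hp : p.Prime) (hk : k < p) (h : 3 * p < 4 * k) :
    p ∣ (4 * k).choose (2 * k) := by
  refine hp.dvd_choose_of_mod_lt_mod ?_
  have h₄ : 4 * k % p = 4 * k - 3 * p := by
    conv_lhs => rw [← Nat.sub_add_cancel (show p * 3 ≤ 4 * k by omega)]
    rw [Nat.add_mul_mod_self_left, Nat.mod_eq_of_lt (by omega)]
    omega
  have h₂ : 2 * k % p = 2 * k - p := by
    conv_lhs => rw [← Nat.sub_add_cancel (show p * 1 ≤ 2 * k by omega)]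
    rw [Nat.add_mul_mod_self_left, Nat.mod_eq_of_lt (by omega), mul_one]
  omega

theorem sq_dvd_cCoeff {p k : ℕ} (hp : p.Prime) (hk : k < p) (h : p ≤ 2 * k) :
    p ^ 2 ∣ cCoeff k := by
  have hc := prime_dvd_choose_two_mul hp hk h
  rw [sq, cCoeff, bCoeff, ← mul_assoc]
  exact dvd_mul_of_dvd_left (mul_dvd_mul hc hc) _

theorem sq_dvd_cCoeff_mul_choose {p i j : ℕ} (hp : p.Prime) (hi : i < p) (h : p ≤ i + j) :
    p ^ 2 ∣ cCoeff i * i.choose j := by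
  rcases le_or_gt j i with hji | hij
  · exact dvd_mul_of_dvd_left (sq_dvd_cCoeff hp hi (by omega)) _
  · simp [choose_eq_zero_of_lt hij]

theorem sq_dvd_bCoeff_mul_of_le {p i j : ℕ} (hp : p.Prime) (hij : i ≤ j) (hj : j < p)
    (h : p ≤ i + j) : p ^ 2 ∣ bCoeff i * bCoeff j := by
  have hcj : p ∣ (2 * j).choose j := prime_dvd_choose_two_mul hp hj (by omega)
  have hrest : p ∣ (2 * i).choose i * (4 * i).choose (2 * i) * (4 * j).choose (2 * j) := by
    rcases le_or_gt p (2 * i) with h₂ | h₂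
    · exact dvd_mul_of_dvd_left
        (dvd_mul_of_dvd_left (prime_dvd_choose_two_mul hp (by omega) h₂) _) _
    rcases le_or_gt p (4 * i) with h₄ | h₄
    · have := prime_dvd_choose_two_mul hp h₂ (by omega)
      rw [← mul_assoc, show 2 * 2 = 4 by rfl] at this
      exact dvd_mul_of_dvd_left (dvd_mul_of_dvd_right this _) _
    · exact dvd_mul_of_dvd_right (prime_dvd_choose_four_mul hp hj (by omega)) _
  rw [sq]
  exact (mul_dvd_mul hcj hrest).trans (dvd_of_eq (by unfold bCoeff; ring))

theorem sq_dvd_bCoeff_mul {p i j : ℕ} (hp : p.Prime) (hi : i < p) (hj : j < p)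
    (h : p ≤ i + j) : p ^ 2 ∣ bCoeff i * bCoeff j := by
  rcases le_total i j with hij | hji
  · exact sq_dvd_bCoeff_mul_of_le hp hij hj h
  · rw [mul_comm]
    exact sq_dvd_bCoeff_mul_of_le hp hji hi (by omega)

theorem sum_range_mul_pow_mul_one_sub_eq (p : ℕ) (x : ℤ) :
    ∑ k ∈ range p,
      (Nat.choose (2 * k) k : ℤ) ^ 2 * Nat.choose (4 * k) (2 * k) * (x * (1 - 64 * x)) ^ k
      = ∑ i ∈ range p, ∑ j ∈ range p, (cCoeff i : ℤ) * i.choose j * (-64) ^ j * x ^ (i + j) :=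
  sum_congr rfl fun i hi ↦ by
    rw [mul_one_sub_mul_pow_eq_sum _ _ (mem_range.mp hi), mul_sum]
    exact sum_congr rfl fun j _ ↦ by push_cast [cCoeff, bCoeff]; ring

theorem sq_sum_range_mul_pow_eq (p : ℕ) (x : ℤ) :
    (∑ k ∈ range p, (Nat.choose (2 * k) k : ℤ) * Nat.choose (4 * k) (2 * k) * x ^ k) ^ 2
      = ∑ i ∈ range p, ∑ j ∈ range p, (bCoeff i : ℤ) * bCoeff j * x ^ (i + j) := by
  rw [sq, sum_mul_sum]
  exact sum_congr rfl fun i _ ↦ sum_congr rfl fun j _ ↦ by push_cast [bCoeff]; ring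

theorem stmt_4_general (p : ℕ) (hp : p.Prime) (x : ℤ) :
    (∑ k ∈ Finset.range p,
      (Nat.choose (2 * k) k : ℤ) ^ 2 * Nat.choose (4 * k) (2 * k) * (x * (1 - 64 * x)) ^ k)
    ≡ (∑ k ∈ Finset.range p,
      (Nat.choose (2 * k) k : ℤ) * Nat.choose (4 * k) (2 * k) * x ^ k) ^ 2 [ZMOD (p : ℤ) ^ 2] := by
  refine Int.ModEq.symm (Int.modEq_iff_dvd.mpr ?_)
  rw [sum_range_mul_pow_mul_one_sub_eq, sq_sum_range_mul_pow_eq, ← sum_sub_distrib]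
  simp only [← sum_sub_distrib, ← sub_mul]
  refine dvd_sum_range_sum_range _ (fun n _ ↦ ?_) fun i hi j hj hij ↦ dvd_mul_of_dvd_left ?_ _
  · rw [sum_congr rfl fun i hi ↦ by
        rw [Nat.add_sub_cancel' (Nat.lt_succ_iff.mp (mem_range.mp hi))],
      ← sum_mul, sum_sub_distrib, sum_cCoeff_mul_choose_eq_sum_bCoeff_mul, sub_self, zero_mul]
  · exact dvd_sub (dvd_mul_of_dvd_left (by exact_mod_cast sq_dvd_cCoeff_mul_choose hp hi hij) _)
      (by exact_mod_cast sq_dvd_bCoeff_mul hp hi hj hij)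

theorem stmt_4 (p : ℕ) (hp : p.Prime) (hodd : Odd p) (x : ℤ) :
    (∑ k ∈ Finset.range p,
      (Nat.choose (2 * k) k : ℤ) ^ 2 * Nat.choose (4 * k) (2 * k) * (x * (1 - 64 * x)) ^ k)
    ≡ (∑ k ∈ Finset.range p,
      (Nat.choose (2 * k) k : ℤ) * Nat.choose (4 * k) (2 * k) * x ^ k) ^ 2 [ZMOD (p : ℤ) ^ 2] :=
  stmt_4_general p hp x
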